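/- arXiv:1610.03598 — 10 statements merged into one kernel-verified Lean document; each statement's English description precedes it below -/
import Mathlib

section
/- Let X(t) be a solution of the β-polygon flow with β > 0 and let Q ∈ ℂ, with Q = (Q,...,Q) the corresponding constant polygon. Let α = β + 2. Then the α-norm ‖X(t) - Q‖_α = (∑_{k=0}^{N-1} |X_k(t) - Q|^α)^{1/α} is nonincreasing in t. -/
/-- The right-hand side of the β-polygon flow:
`(M_X X)_j = l_j^β (X_{j+1} - X_j) + l_{j-1}^β (X_{j-1} - X_j)` with `l_j = ‖X_{j+1} - X_j‖`. -/
noncomputable def flowRHS {N : ℕ} [NeZero N] (β : ℝ) (X : ZMod N → ℂ) (j : ZMod N) : ℂ :=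
  ((‖X (j + 1) - X j‖ ^ β : ℝ) : ℂ) * (X (j + 1) - X j)
    + ((‖X (j - 1) - X j‖ ^ β : ℝ) : ℂ) * (X (j - 1) - X j)


/-!
The flow commutes with translations, so take `Q = 0`. Then
`d/dt ∑ₖ ‖Xₖ‖^(β+2) = (β+2) ∑ₖ ‖Xₖ‖^β ⟪Xₖ, Ẋₖ⟫`, and regrouping this sum by the edges of the
cycle gives `(β+2) ∑ⱼ lⱼ^β (‖a‖^β ⟪a, b - a⟫ + ‖b‖^β ⟪b, a - b⟫)` with `a = Xⱼ`, `b = Xⱼ₊₁`.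
By Cauchy–Schwarz each bracket is at most `-(‖a‖ - ‖b‖)(‖a‖^(β+1) - ‖b‖^(β+1)) ≤ 0`.
-/

open scoped RealInnerProductSpace

section InnerProductSpace

variable {E : Type*} [NormedAddCommGroup E] [InnerProductSpace ℝ E]

theorem HasDerivAt.norm_rpow {u : ℝ → E} {u' : E} {t : ℝ} (hu : HasDerivAt u u' t)
    {p : ℝ} (hp : 1 < p) :
    HasDerivAt (fun s => ‖u s‖ ^ p) (p * ‖u t‖ ^ (p - 2) * ⟪u t, u'⟫) t := by
  have h := (hasFDerivAt_norm_rpow (u t) hp).comp_hasDerivAt t hu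
  simp only [FunLike.coe_smul, Pi.smul_apply, innerSL_apply_apply, smul_eq_mul] at h
  exact h

theorem norm_rpow_mul_inner_sub_add_nonpos {β : ℝ} (hβ : -1 < β) (a b : E) :
    ‖a‖ ^ β * ⟪a, b - a⟫ + ‖b‖ ^ β * ⟪b, a - b⟫ ≤ 0 := by
  have hpow : ∀ x : ℝ, 0 ≤ x → x ^ (β + 1) = x ^ β * x :=
    fun x hx => Real.rpow_add_one' hx (by linarith)
  have hmono : 0 ≤ (‖a‖ - ‖b‖) * (‖a‖ ^ β * ‖a‖ - ‖b‖ ^ β * ‖b‖) := by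
    rw [← hpow _ (norm_nonneg a), ← hpow _ (norm_nonneg b)]
    rcases le_total ‖a‖ ‖b‖ with h | h
    · exact mul_nonneg_of_nonpos_of_nonpos (sub_nonpos.2 h)
        (sub_nonpos.2 (Real.rpow_le_rpow (norm_nonneg a) h (by linarith)))
    · exact mul_nonneg (sub_nonneg.2 h)
        (sub_nonneg.2 (Real.rpow_le_rpow (norm_nonneg b) h (by linarith)))
  have hcs : (‖a‖ ^ β + ‖b‖ ^ β) * ⟪a, b⟫ ≤ (‖a‖ ^ β + ‖b‖ ^ β) * (‖a‖ * ‖b‖) :=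
    mul_le_mul_of_nonneg_left (real_inner_le_norm a b) (by positivity)
  rw [inner_sub_right, inner_sub_right, real_inner_self_eq_norm_sq, real_inner_self_eq_norm_sq,
    real_inner_comm a b]
  linear_combination hcs + hmono

end InnerProductSpace

theorem flowRHS_sub_const {N : ℕ} [NeZero N] (β : ℝ) (X : ZMod N → ℂ) (Q : ℂ) :
    flowRHS β (fun j => X j - Q) = flowRHS β X := by
  funext j
  simp only [flowRHS, sub_sub_sub_cancel_right]

theorem sum_norm_rpow_mul_inner_flowRHS_nonpos {N : ℕ} [NeZero N] {β : ℝ} (hβ : -1 < β)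
    (Y : ZMod N → ℂ) : ∑ k, ‖Y k‖ ^ β * ⟪Y k, flowRHS β Y k⟫ ≤ 0 := by
  set l : ZMod N → ℝ := fun j => ‖Y (j + 1) - Y j‖ ^ β with hl
  have hsplit : ∀ k, ‖Y k‖ ^ β * ⟪Y k, flowRHS β Y k⟫ =
      l k * (‖Y k‖ ^ β * ⟪Y k, Y (k + 1) - Y k⟫)
        + l (k - 1) * (‖Y k‖ ^ β * ⟪Y k, Y (k - 1) - Y k⟫) := by
    intro k
    simp only [flowRHS, hl, ← Complex.real_smul, inner_add_right, real_inner_smul_right,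
      sub_add_cancel, norm_sub_rev (Y (k - 1))]
    ring
  have hshift : ∑ k, l (k - 1) * (‖Y k‖ ^ β * ⟪Y k, Y (k - 1) - Y k⟫)
      = ∑ j, l j * (‖Y (j + 1)‖ ^ β * ⟪Y (j + 1), Y j - Y (j + 1)⟫) :=
    Fintype.sum_equiv (Equiv.subRight 1) _ _ fun k => by
      simp only [Equiv.subRight_apply, sub_add_cancel]
  rw [Finset.sum_congr rfl fun k _ => hsplit k, Finset.sum_add_distrib, hshift,
    ← Finset.sum_add_distrib]
  refine Finset.sum_nonpos fun j _ => ?_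
  rw [← mul_add]
  exact mul_nonpos_of_nonneg_of_nonpos (by positivity)
    (norm_rpow_mul_inner_sub_add_nonpos hβ (Y j) (Y (j + 1)))

theorem antitone_sum_norm_sub_rpow_of_flow {N : ℕ} [NeZero N] {β : ℝ} (hβ : -1 < β)
    {X : ℝ → ZMod N → ℂ} (hflow : ∀ t j, HasDerivAt (fun s => X s j) (flowRHS β (X t) j) t)
    (Q : ℂ) : Antitone fun t => ∑ k, ‖X t k - Q‖ ^ (β + 2) := by
  refine antitone_of_hasDerivAt_nonpos
    (fun t => HasDerivAt.fun_sum fun k _ => ((hflow t k).sub_const Q).norm_rpow (by linarith))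
    fun t => ?_
  have h := sum_norm_rpow_mul_inner_flowRHS_nonpos hβ fun j => X t j - Q
  rw [flowRHS_sub_const] at h
  simp_rw [add_sub_cancel_right, mul_assoc, ← Finset.mul_sum]
  exact mul_nonpos_of_nonneg_of_nonpos (by linarith) h

theorem stmt5 (N : ℕ) [NeZero N] (β : ℝ) (hβ : 0 < β) (X : ℝ → ZMod N → ℂ)
    (hflow : ∀ t j, HasDerivAt (fun s => X s j) (flowRHS β (X t) j) t) (Q : ℂ) :
    ∀ s t : ℝ, s ≤ t →
      (∑ k, ‖X t k - Q‖ ^ (β + 2)) ^ (1 / (β + 2))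
        ≤ (∑ k, ‖X s k - Q‖ ^ (β + 2)) ^ (1 / (β + 2)) := by
  intro s t hst
  exact Real.rpow_le_rpow (by positivity)
    (antitone_sum_norm_sub_rpow_of_flow (by linarith) hflow Q hst)
    (one_div_nonneg.2 (by linarith))
end

section
/- Under the β-polygon flow, the energy F_α(X) = (1/α)∑_{j=0}^{N-1} l_j^α with α = β + 2 satisfies dF_α/dt = -∑_{j=0}^{N-1} | l_j^β (X_{j+1} - X_j) + l_{j-1}^β (X_{j-1} - X_j) |², and in particular F_α is nonincreasing along the flow. -/
/-!
With `e_j = X_{j+1} - X_j` and the edge flux `w_j = l_j^β e_j`, the flow reads `Ẋ_j = w_j - w_{j-1}`.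
Differentiating, `d/dt (l_j^α / α) = ⟪w_j, ė_j⟫ = ⟪w_j, Ẋ_{j+1} - Ẋ_j⟫`, and summation by parts
around the polygon turns `∑ ⟪w_j, Ẋ_{j+1} - Ẋ_j⟫` into `-∑ ⟪w_j - w_{j-1}, Ẋ_j⟫ = -∑ |Ẋ_j|²`.
-/

open scoped InnerProductSpace

section InnerProductSpace

variable {E : Type*} [NormedAddCommGroup E] [InnerProductSpace ℝ E]

theorem HasDerivAt.norm_rpow_add_two {c : ℝ → E} {v : E} {t β : ℝ} (hc : HasDerivAt c v t)
    (hβ : -1 < β) :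
    HasDerivAt (fun s => ‖c s‖ ^ (β + 2)) ((β + 2) * ⟪‖c t‖ ^ β • c t, v⟫_ℝ) t := by
  have h := (hasFDerivAt_norm_rpow (c t) (p := β + 2) (by linarith)).comp_hasDerivAt t hc
  refine h.congr_deriv ?_
  simp [real_inner_smul_left, mul_assoc]

theorem sum_inner_sub_shift_eq_neg {G : Type*} [AddGroup G] [Fintype G] (a : G) (w F : G → E) :
    ∑ j, ⟪w j, F (j + a) - F j⟫_ℝ = -∑ j, ⟪w j - w (j - a), F j⟫_ℝ := by
  have hshift : ∑ j, ⟪w j, F (j + a)⟫_ℝ = ∑ j, ⟪w (j - a), F j⟫_ℝ :=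
    Fintype.sum_equiv (Equiv.addRight a) _ _ fun j => by simp
  simp only [inner_sub_left, inner_sub_right, Finset.sum_sub_distrib, hshift]
  ring

end InnerProductSpace

noncomputable def edgeFlux {N : ℕ} (β : ℝ) (X : ZMod N → ℂ) (j : ZMod N) : ℂ :=
  ‖X (j + 1) - X j‖ ^ β • (X (j + 1) - X j)

theorem flowRHS_eq_edgeFlux_sub {N : ℕ} [NeZero N] (β : ℝ) (X : ZMod N → ℂ) (j : ZMod N) :
    flowRHS β X j = edgeFlux β X j - edgeFlux β X (j - 1) := by
  rw [flowRHS, edgeFlux, edgeFlux, sub_add_cancel, Complex.real_smul, Complex.real_smul,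
    ← norm_neg (X (j - 1) - X j), neg_sub]
  ring

theorem stmt6 (N : ℕ) [NeZero N] (β : ℝ) (hβ : 0 < β) (X : ℝ → ZMod N → ℂ)
    (hflow : ∀ t j, HasDerivAt (fun s => X s j) (flowRHS β (X t) j) t) :
    ∀ t : ℝ,
      HasDerivAt (fun s => (1 / (β + 2)) * ∑ j, ‖X s (j + 1) - X s j‖ ^ (β + 2))
        (-∑ j, ‖flowRHS β (X t) j‖ ^ 2) t := by
  intro t
  set F := flowRHS β (X t)
  set w := edgeFlux β (X t)
  have hedge (j : ZMod N) : HasDerivAt (fun s => ‖X s (j + 1) - X s j‖ ^ (β + 2))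
      ((β + 2) * ⟪w j, F (j + 1) - F j⟫_ℝ) t :=
    ((hflow t (j + 1)).sub (hflow t j)).norm_rpow_add_two (by linarith)
  refine ((HasDerivAt.fun_sum fun j _ => hedge j).const_mul (1 / (β + 2))).congr_deriv ?_
  have hβ2 : β + 2 ≠ 0 := by linarith
  calc 1 / (β + 2) * ∑ j, (β + 2) * ⟪w j, F (j + 1) - F j⟫_ℝ
      = ∑ j, ⟪w j, F (j + 1) - F j⟫_ℝ := by rw [← Finset.mul_sum]; field_simp
    _ = -∑ j, ⟪F j, F j⟫_ℝ := by
      rw [sum_inner_sub_shift_eq_neg]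
      simp only [F, w, flowRHS_eq_edgeFlux_sub]
    _ = -∑ j, ‖F j‖ ^ 2 := by simp only [real_inner_self_eq_norm_sq]
end

section
/- Under the β-polygon flow, the edge lengths evolve by dl_j/dt = -2 l_j^{β+1} - l_{j+1}^{β+1} cos θ_{j+1} - l_{j-1}^{β+1} cos θ_j, where θ_j is the interior angle at vertex X_j. -/
open scoped RealInnerProductSpace ComplexConjugate

theorem HasDerivAt.norm {F : Type*} [NormedAddCommGroup F] [InnerProductSpace ℝ F]
    {f : ℝ → F} {f' : F} {t : ℝ} (hf : HasDerivAt f f' t) (h0 : f t ≠ 0) :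
    HasDerivAt (‖f ·‖) (⟪f t, f'⟫ / ‖f t‖) t := by
  have h := hf.norm_sq.sqrt (pow_ne_zero 2 (norm_ne_zero_iff.2 h0))
  simp only [Real.sqrt_sq (norm_nonneg _)] at h
  convert h using 1
  field_simp [norm_ne_zero_iff.2 h0]

theorem real_inner_eq_neg_mul_cos {p q r : ℂ} {c : ℝ} (hpq : p ≠ q) (hqr : q ≠ r)
    (hc : c = ((r - q) * conj (p - q)).re / (‖r - q‖ * ‖q - p‖)) :
    ⟪q - p, r - q⟫ = -(‖q - p‖ * ‖r - q‖ * c) := by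
  have h₁ : ‖q - p‖ ≠ 0 := norm_ne_zero_iff.2 (sub_ne_zero.2 hpq.symm)
  have h₂ : ‖r - q‖ ≠ 0 := norm_ne_zero_iff.2 (sub_ne_zero.2 hqr.symm)
  rw [hc, Complex.inner, ← neg_sub q p, map_neg, mul_neg, Complex.neg_re]
  field_simp

theorem flowRHS_add_one_sub_flowRHS {N : ℕ} [NeZero N] (β : ℝ) (Y : ZMod N → ℂ) (j : ZMod N) :
    flowRHS β Y (j + 1) - flowRHS β Y j
      = ‖Y (j + 1 + 1) - Y (j + 1)‖ ^ β • (Y (j + 1 + 1) - Y (j + 1))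
        - (2 * ‖Y (j + 1) - Y j‖ ^ β) • (Y (j + 1) - Y j)
        + ‖Y j - Y (j - 1)‖ ^ β • (Y j - Y (j - 1)) := by
  simp only [flowRHS, add_sub_cancel_right, Complex.real_smul]
  rw [norm_sub_rev (Y j), norm_sub_rev (Y (j - 1))]
  push_cast
  ring

theorem stmt7_general (N : ℕ) [NeZero N] (β : ℝ) (X : ℝ → ZMod N → ℂ)
    (l : ℝ → ZMod N → ℝ) (θ : ℝ → ZMod N → ℝ)
    (hl : ∀ t j, l t j = ‖X t (j + 1) - X t j‖)
    (hlpos : ∀ t j, 0 < l t j)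
    (hθ : ∀ t j, Real.cos (θ t j)
      = ((X t (j + 1) - X t j) * (starRingEnd ℂ) (X t (j - 1) - X t j)).re
          / (l t j * l t (j - 1)))
    (hflow : ∀ t j, HasDerivAt (fun s => X s j) (flowRHS β (X t) j) t) :
    ∀ t j, HasDerivAt (fun s => l s j)
      (-2 * l t j ^ (β + 1) - l t (j + 1) ^ (β + 1) * Real.cos (θ t (j + 1))
        - l t (j - 1) ^ (β + 1) * Real.cos (θ t j)) t := by
  intro t j
  have hvert (i : ZMod N) : X t i ≠ X t (i + 1) := by
    have := hlpos t i
    rw [hl, norm_pos_iff, sub_ne_zero] at this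
    exact this.symm
  have hcos_j := hθ t j
  rw [hl, hl, sub_add_cancel] at hcos_j
  have hcos_succ := hθ t (j + 1)
  rw [hl, hl, add_sub_cancel_right] at hcos_succ
  have hinner_j := real_inner_eq_neg_mul_cos (by simpa using hvert (j - 1)) (hvert j) hcos_j
  have hinner_succ := real_inner_eq_neg_mul_cos (hvert j) (hvert (j + 1)) hcos_succ
  have hedge : HasDerivAt (fun s => X s (j + 1) - X s j)
      (flowRHS β (X t) (j + 1) - flowRHS β (X t) j) t := (hflow t (j + 1)).sub (hflow t j)
  have hprev : ‖X t j - X t (j - 1)‖ = l t (j - 1) := by rw [hl, sub_add_cancel]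
  rw [show (fun s => l s j) = fun s => ‖X s (j + 1) - X s j‖ from funext (hl · j)]
  convert hedge.norm (sub_ne_zero.2 (hvert j).symm) using 1
  rw [flowRHS_add_one_sub_flowRHS, inner_add_right, inner_sub_right, inner_smul_right,
    inner_smul_right, inner_smul_right, real_inner_self_eq_norm_sq,
    real_inner_comm (X t j - X t (j - 1)), hinner_j, hinner_succ, ← hl, ← hl, hprev]
  have hlj : l t j ≠ 0 := (hlpos t j).ne'
  rw [Real.rpow_add_one hlj, Real.rpow_add_one (hlpos t (j + 1)).ne',
    Real.rpow_add_one (hlpos t (j - 1)).ne']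
  field_simp
  ring

theorem stmt7 (N : ℕ) [NeZero N] (β : ℝ) (hβ : 0 < β) (X : ℝ → ZMod N → ℂ)
    (l : ℝ → ZMod N → ℝ) (θ : ℝ → ZMod N → ℝ)
    (hl : ∀ t j, l t j = ‖X t (j + 1) - X t j‖)
    (hlpos : ∀ t j, 0 < l t j)
    (hθ : ∀ t j, Real.cos (θ t j)
      = ((X t (j + 1) - X t j) * (starRingEnd ℂ) (X t (j - 1) - X t j)).re
          / (l t j * l t (j - 1)))
    (hflow : ∀ t j, HasDerivAt (fun s => X s j) (flowRHS β (X t) j) t) :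
    ∀ t j, HasDerivAt (fun s => l s j)
      (-2 * l t j ^ (β + 1) - l t (j + 1) ^ (β + 1) * Real.cos (θ t (j + 1))
        - l t (j - 1) ^ (β + 1) * Real.cos (θ t j)) t :=
  stmt7_general N β X l θ hl hlpos hθ hflow
end

section
/- The fixed points of the β-polygon flow dX_j/dt = l_j^β (X_{j+1}-X_j) + l_{j-1}^β (X_{j-1}-X_j) with β > 0 are exactly the degenerate polygons with X_0 = X_1 = ... = X_{N-1}. -/
lemma const_of_step {N : ℕ} [NeZero N] {α : Type*} (f : ZMod N → α)
    (h : ∀ j, f (j + 1) = f j) : ∀ j, f j = f 0 := by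
  intro j
  have key : ∀ n : ℕ, f (n : ZMod N) = f 0 := by
    intro n
    induction n with
    | zero => simp
    | succ n ih => rw [Nat.cast_succ, h, ih]
  have := key j.val
  rwa [ZMod.natCast_val, ZMod.cast_id] at this

theorem stmt8 (N : ℕ) [NeZero N] (β : ℝ) (hβ : 0 < β) (X : ZMod N → ℂ) :
    (∀ j, flowRHS β X j = 0) ↔ ∀ j k, X j = X k := by
  constructor
  · intro h
    set d : ZMod N → ℂ := fun j => X (j + 1) - X j with hd
    set a : ZMod N → ℂ := fun j => ((‖d j‖ ^ β : ℝ) : ℂ) * d j with ha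
    -- flowRHS j = a j - a (j-1)
    have hflow : ∀ j, a j - a (j - 1) = 0 := by
      intro j
      have hj := h j
      have h1 : X (j - 1) - X j = -(d (j - 1)) := by
        show X (j - 1) - X j = -(X (j - 1 + 1) - X (j - 1))
        rw [sub_add_cancel]; ring
      rw [flowRHS, h1, norm_neg] at hj
      show ((‖d j‖ ^ β : ℝ) : ℂ) * d j - ((‖d (j - 1)‖ ^ β : ℝ) : ℂ) * d (j - 1) = 0
      rw [sub_eq_add_neg, ← mul_neg]
      exact hj
    have hstep : ∀ j, a (j + 1) = a j := by
      intro j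
      have := hflow (j + 1)
      rw [add_sub_cancel_right] at this
      linear_combination this
    have hconst : ∀ j, a j = a 0 := const_of_step a hstep
    -- sum of d over the cycle is 0
    have hsum : ∑ j : ZMod N, d j = 0 := by
      have : ∑ j : ZMod N, X (j + 1) = ∑ j : ZMod N, X j :=
        Fintype.sum_equiv (Equiv.addRight 1) _ _ (fun j => rfl)
      simp [hd, Finset.sum_sub_distrib, this]
    -- the constant a 0 is zero
    have ha0 : a 0 = 0 := by
      by_contra hc
      -- each d j ≠ 0
      have hdne : ∀ j, d j ≠ 0 := by
        intro j hj0
        apply hc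
        rw [← hconst j, ha]
        simp [hj0]
      -- norms are all equal
      have hnorm : ∀ j, ‖d j‖ = ‖a 0‖ ^ ((β + 1)⁻¹) := by
        intro j
        have hpos : 0 < ‖d j‖ := norm_pos_iff.mpr (hdne j)
        have h1 : ‖a 0‖ = ‖d j‖ ^ (β + 1) := by
          rw [← hconst j, ha]
          simp only [norm_mul, Complex.norm_real, Real.norm_eq_abs,
            abs_of_nonneg (Real.rpow_nonneg (norm_nonneg _) β)]
          rw [Real.rpow_add hpos, Real.rpow_one]
        rw [h1, ← Real.rpow_mul (le_of_lt hpos)]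
        rw [mul_inv_cancel₀ (by linarith : β + 1 ≠ 0), Real.rpow_one]
      -- d is constant
      have hdconst : ∀ j, d j = d 0 := by
        intro j
        have e1 : ((‖d j‖ ^ β : ℝ) : ℂ) * d j = ((‖d 0‖ ^ β : ℝ) : ℂ) * d 0 :=
          hconst j
        rw [hnorm j, hnorm 0] at e1
        have hne : (((‖a 0‖ ^ (β + 1)⁻¹) ^ β : ℝ) : ℂ) ≠ 0 := by
          have : (0:ℝ) < ‖a 0‖ := norm_pos_iff.mpr hc
          have : (0:ℝ) < (‖a 0‖ ^ (β + 1)⁻¹) ^ β :=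
            Real.rpow_pos_of_pos (Real.rpow_pos_of_pos this _) _
        
          exact_mod_cast ne_of_gt this
        exact mul_left_cancel₀ hne e1
      have : (N : ℂ) * d 0 = 0 := by
        rw [← hsum]
        rw [Finset.sum_congr rfl (fun j _ => hdconst j)]
        simp [mul_comm]
      have hN : (N : ℂ) ≠ 0 := Nat.cast_ne_zero.mpr (NeZero.ne N)
      exact hdne 0 ((mul_eq_zero.mp this).resolve_left hN)
    -- hence all d j = 0
    have hdzero : ∀ j, d j = 0 := by
      intro j
      by_contra hj0
      have hpos : 0 < ‖d j‖ := norm_pos_iff.mpr hj0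
      have : a j = 0 := (hconst j).trans ha0
      rw [ha] at this
      have hne : ((‖d j‖ ^ β : ℝ) : ℂ) ≠ 0 :=
        Complex.ofReal_ne_zero.mpr (ne_of_gt (Real.rpow_pos_of_pos hpos β))
      exact hj0 ((mul_eq_zero.mp this).resolve_left hne)
    have hX : ∀ j, X (j + 1) = X j := fun j => by
      have := hdzero j; rw [hd] at this; exact sub_eq_zero.mp this
    have hXc : ∀ j, X j = X 0 := const_of_step X hX
    intro j k
    rw [hXc j, hXc k]
  · intro h j
    simp [flowRHS, h (j + 1) j, h (j - 1) j]
end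

section
/- Let P_k = (1, ω^k, ..., ω^{(N-1)k}) with ω = e^{2πi/N} be the regular (possibly star) N-gon, let l = |ω^k - 1| be its edge length, λ_k = -4 sin²(πk/N), and β > 0. Then P(t) = a(t) P_k with a(t) = (1 - β l^β λ_k t)^{-1/β} is a solution of the β-polygon flow, i.e., dP_j/dt = |P_{j+1}-P_j|^β (P_{j+1}-P_j) + |P_{j-1}-P_j|^β (P_{j-1}-P_j) for all j and all t ≥ 0. -/
theorem pow_val_add_one_mul {M : Type*} [Monoid M] {N : ℕ} [NeZero N] {x : M} (hx : x ^ N = 1)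
    (m : ZMod N) (n : ℕ) : x ^ ((m + 1).val * n) = x ^ n * x ^ (m.val * n) := by
  have hval : (m + 1).val ≡ m.val + 1 [MOD N] :=
    (ZMod.natCast_eq_natCast_iff _ _ N).1 (by push_cast [ZMod.natCast_val, ZMod.cast_id]; rfl)
  rw [pow_eq_pow_of_modEq (hval.mul_right n) hx, ← pow_add]
  ring_nf

namespace Complex

theorem norm_inv_sub_one_of_norm_eq_one {q : ℂ} (hq : ‖q‖ = 1) : ‖q⁻¹ - 1‖ = ‖q - 1‖ := by
  have hq0 : q ≠ 0 := norm_ne_zero_iff.1 (by rw [hq]; exact one_ne_zero)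
  rw [show q⁻¹ - 1 = -q⁻¹ * (q - 1) by field_simp; ring, norm_mul, norm_neg, norm_inv, hq,
    inv_one, one_mul]

theorem add_inv_sub_two_of_norm_eq_one {q : ℂ} (hq : ‖q‖ = 1) :
    q + q⁻¹ - 2 = ((-‖q - 1‖ ^ 2 : ℝ) : ℂ) := by
  have hinv : q⁻¹ = (starRingEnd ℂ) q := by
    rw [inv_def, normSq_eq_norm_sq, hq]; simp
  rw [hinv, add_conj, norm_sub_one_sq_eq_of_norm_eq_one hq]
  push_cast
  ring

theorem norm_exp_two_pi_mul_I_div_pow_sub_one_sq (N n : ℕ) :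
    ‖exp (2 * Real.pi * I / N) ^ n - 1‖ ^ 2 = 4 * Real.sin (Real.pi * n / N) ^ 2 := by
  have h : exp (2 * Real.pi * I / N) ^ n = exp (I * ((2 * Real.pi * n / N : ℝ) : ℂ)) := by
    rw [← exp_nat_mul]; congr 1; push_cast; ring
  rw [h, norm_exp_I_mul_ofReal_sub_one, norm_mul, Real.norm_two, mul_pow, Real.norm_eq_abs,
    sq_abs, show 2 * Real.pi * n / N / 2 = Real.pi * n / N by ring]
  norm_num

end Complex

theorem flowRHS_of_forall_add_one_eq_mul {N : ℕ} [NeZero N] (β : ℝ) {X : ZMod N → ℂ} {q : ℂ}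
    (hq : ‖q‖ = 1) (hX : ∀ m, X (m + 1) = q * X m) (j : ZMod N) :
    flowRHS β X j = (((‖X j‖ * ‖q - 1‖) ^ β * -‖q - 1‖ ^ 2 : ℝ) : ℂ) * X j := by
  have hq0 : q ≠ 0 := norm_ne_zero_iff.1 (by rw [hq]; exact one_ne_zero)
  have hprev : X (j - 1) = q⁻¹ * X j := by
    rw [← sub_add_cancel j 1, hX, sub_add_cancel, inv_mul_cancel_left₀ hq0]
  have hnext_sub : X (j + 1) - X j = (q - 1) * X j := by rw [hX]; ring
  have hprev_sub : X (j - 1) - X j = (q⁻¹ - 1) * X j := by rw [hprev]; ring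
  rw [flowRHS, hnext_sub, hprev_sub, norm_mul, norm_mul,
    Complex.norm_inv_sub_one_of_norm_eq_one hq, Complex.ofReal_mul,
    ← Complex.add_inv_sub_two_of_norm_eq_one hq, mul_comm ‖X j‖]
  ring

theorem hasDerivAt_one_sub_mul_rpow_neg_inv {β c t : ℝ} (hβ : β ≠ 0) (ht : 0 < 1 - β * c * t) :
    HasDerivAt (fun s => (1 - β * c * s) ^ (-1 / β))
      (c * ((1 - β * c * t) ^ (-1 / β)) ^ (β + 1)) t := by
  have hlin : HasDerivAt (fun s : ℝ => 1 - β * c * s) (-(β * c)) t := by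
    simpa using ((hasDerivAt_id t).const_mul (β * c)).const_sub 1
  convert hlin.rpow_const (p := -1 / β) (Or.inl ht.ne') using 1
  rw [← Real.rpow_mul ht.le, show -1 / β * (β + 1) = -1 / β - 1 by field_simp; ring]
  field_simp

theorem stmt9 (N : ℕ) [NeZero N] (β : ℝ) (hβ : 0 < β) (k : ZMod N) (ω : ℂ)
    (hω : ω = Complex.exp (2 * Real.pi * Complex.I / N))
    (P : ZMod N → ℂ) (hP : P = fun j => ω ^ (j.val * k.val))
    (l : ℝ) (hl : l = ‖ω ^ k.val - 1‖)
    (lam : ℝ) (hlam : lam = -4 * Real.sin (Real.pi * k.val / N) ^ 2)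
    (a : ℝ → ℝ) (ha : a = fun t => (1 - β * l ^ β * lam * t) ^ (-1 / β)) :
    ∀ t : ℝ, 0 ≤ t → ∀ j,
      HasDerivAt (fun s => (a s : ℂ) * P j)
        (flowRHS β (fun m => (a t : ℂ) * P m) j) t := by
  intro t ht j
  have hωN : ω ^ N = 1 := hω ▸ (Complex.isPrimitiveRoot_exp N (NeZero.ne N)).pow_eq_one
  have hω_norm : ‖ω‖ = 1 := Complex.norm_eq_one_of_pow_eq_one hωN (NeZero.ne N)
  have hlam_eq : lam = -l ^ 2 := by
    rw [hlam, hl, hω, Complex.norm_exp_two_pi_mul_I_div_pow_sub_one_sq]; ring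
  have hl_nonneg : 0 ≤ l := hl ▸ norm_nonneg _
  have hpos : 0 < 1 - β * l ^ β * lam * t := by
    have : 0 ≤ β * l ^ β * l ^ 2 * t := by positivity
    linarith [show β * l ^ β * lam * t = -(β * l ^ β * l ^ 2 * t) by rw [hlam_eq]; ring]
  have hat : 0 < a t := ha ▸ Real.rpow_pos_of_pos hpos _
  have ha_deriv : HasDerivAt a (l ^ β * lam * a t ^ (β + 1)) t := by
    have h := hasDerivAt_one_sub_mul_rpow_neg_inv (c := l ^ β * lam) (t := t) hβ.ne'
      (by rwa [← mul_assoc])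
    simp only [← mul_assoc] at h
    rwa [ha]
  have hX : ∀ m, (a t : ℂ) * P (m + 1) = ω ^ k.val * ((a t : ℂ) * P m) := fun m => by
    simp only [hP, pow_val_add_one_mul hωN]; ring
  have hPj : ‖P j‖ = 1 := by rw [hP, norm_pow, hω_norm, one_pow]
  have hcoef : (a t * l) ^ β * -l ^ 2 * a t = l ^ β * lam * a t ^ (β + 1) := by
    rw [Real.mul_rpow hat.le hl_nonneg, Real.rpow_add_one hat.ne', hlam_eq]; ring
  rw [flowRHS_of_forall_add_one_eq_mul β (by rw [norm_pow, hω_norm, one_pow]) hX, ← hl,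
    norm_mul, Complex.norm_real, Real.norm_of_nonneg hat.le, hPj, mul_one]
  refine (ha_deriv.ofReal_comp.mul_const (P j)).congr_deriv ?_
  rw [← hcoef]
  push_cast
  ring
end

section
/- Let X(t) solve the β-polygon flow, let x_0 ∈ ℂ^N, and define ρ(t) = exp[ -t^{2/β} |X(t) - x_0|² - ∫_0^t (β/2) s^{2/β + 1} |M_{X(s)} X(s)|² ds ], where |·| is the Euclidean norm on ℂ^N. Then dρ/dt = -(2/β) ρ(t) t^{2/β - 1} | X(t) - x_0 + (β/2) t M_{X(t)} X(t) |². In particular ρ is nonincreasing for t > 0. -/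
open scoped RealInnerProductSpace

theorem continuous_flowRHS {N : ℕ} [NeZero N] {β : ℝ} (hβ : 0 ≤ β) {X : ℝ → ZMod N → ℂ}
    (hX : ∀ j, Continuous fun s => X s j) (j : ZMod N) :
    Continuous fun s => flowRHS β (X s) j := by
  have hrpow := Real.continuous_rpow_const hβ
  unfold flowRHS
  fun_prop

section InnerProductSpace

variable {ι E : Type*} [Fintype ι] [NormedAddCommGroup E] [InnerProductSpace ℝ E]

theorem hasDerivAt_sum_norm_sub_sq {Y : ℝ → ι → E} {Y' : ι → E} {t : ℝ} (c : ι → E)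
    (hY : ∀ j, HasDerivAt (fun s => Y s j) (Y' j) t) :
    HasDerivAt (fun s => ∑ j, ‖Y s j - c j‖ ^ 2) (∑ j, 2 * ⟪Y t j - c j, Y' j⟫) t := by
  refine HasDerivAt.fun_sum fun j _ => ?_
  have hsub := (hY j).sub_const (c j)
  simpa only [real_inner_self_eq_norm_sq, real_inner_comm (Y' j), two_mul]
    using hsub.inner ℝ hsub

theorem sum_norm_add_smul_sq (a b : ι → E) (r : ℝ) :
    ∑ j, ‖a j + r • b j‖ ^ 2
      = ∑ j, ‖a j‖ ^ 2 + r * ∑ j, 2 * ⟪a j, b j⟫ + r ^ 2 * ∑ j, ‖b j‖ ^ 2 := by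
  simp only [Finset.mul_sum, ← Finset.sum_add_distrib]
  refine Finset.sum_congr rfl fun j _ => ?_
  rw [norm_add_sq_real, real_inner_smul_right, norm_smul, mul_pow, Real.norm_eq_abs, sq_abs]
  ring

end InnerProductSpace

theorem hasDerivAt_exp_neg_rpow_mul_sub_integral {β t A' : ℝ} {A B : ℝ → ℝ} (hβ : 0 < β)
    (ht : 0 < t) (hA : HasDerivAt A A' t) (hB : Continuous B) :
    HasDerivAt
      (fun s => Real.exp (-(s ^ (2 / β) * A s) - ∫ u in (0:ℝ)..s, (β / 2) * u ^ (2 / β + 1) * B u))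
      (-(2 / β) * Real.exp (-(t ^ (2 / β) * A t)
          - ∫ u in (0:ℝ)..t, (β / 2) * u ^ (2 / β + 1) * B u)
        * t ^ (2 / β - 1) * (A t + ((β / 2) * t) * A' + ((β / 2) * t) ^ 2 * B t)) t := by
  have hweight : Continuous fun u : ℝ => (β / 2) * u ^ (2 / β + 1) * B u :=
    (continuous_const.mul (Real.continuous_rpow_const (by positivity))).mul hB
  have hrpowA := (Real.hasDerivAt_rpow_const (p := 2 / β) (Or.inl ht.ne')).mul hA
  have hintegral := intervalIntegral.integral_hasDerivAt_right (hweight.intervalIntegrable 0 t)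
    (hweight.stronglyMeasurableAtFilter _ _) hweight.continuousAt
  refine (hrpowA.neg.sub hintegral).exp.congr_deriv ?_
  have hcoef : -(2 / β * t ^ (2 / β - 1) * A t + t ^ (2 / β) * A') - β / 2 * t ^ (2 / β + 1) * B t
      = -(2 / β) * t ^ (2 / β - 1) * (A t + ((β / 2) * t) * A' + ((β / 2) * t) ^ 2 * B t) := by
    have hpow : t ^ (2 / β) = t ^ (2 / β - 1) * t := by
      rw [← Real.rpow_add_one ht.ne', sub_add_cancel]
    rw [Real.rpow_add_one ht.ne', hpow]
    field_simp
    ring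
  rw [hcoef]
  simp only [Pi.sub_apply, Pi.neg_apply, Pi.mul_apply]
  ring

theorem stmt10 (N : ℕ) [NeZero N] (β : ℝ) (hβ : 0 < β) (X : ℝ → ZMod N → ℂ)
    (x0 : ZMod N → ℂ)
    (hflow : ∀ t j, HasDerivAt (fun s => X s j) (flowRHS β (X t) j) t)
    (ρ : ℝ → ℝ)
    (hρ : ρ = fun t => Real.exp (-(t ^ (2 / β) * ∑ j, ‖X t j - x0 j‖ ^ 2)
      - ∫ s in (0:ℝ)..t, (β / 2) * s ^ (2 / β + 1) * ∑ j, ‖flowRHS β (X s) j‖ ^ 2)) :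
    (∀ t : ℝ, 0 < t →
      HasDerivAt ρ
        (-(2 / β) * ρ t * t ^ (2 / β - 1)
          * ∑ j, ‖X t j - x0 j + (((β / 2) * t : ℝ) : ℂ) * flowRHS β (X t) j‖ ^ 2) t) ∧
    (∀ s t : ℝ, 0 < s → s ≤ t → ρ t ≤ ρ s) := by
  have hX : ∀ j, Continuous fun s => X s j := fun j =>
    continuous_iff_continuousAt.2 fun s => (hflow s j).continuousAt
  have hB : Continuous fun s => ∑ j, ‖flowRHS β (X s) j‖ ^ 2 :=
    continuous_finsetSum _ fun j _ => (continuous_flowRHS hβ.le hX j).norm.pow 2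
  have hderiv : ∀ t : ℝ, 0 < t → HasDerivAt ρ
      (-(2 / β) * ρ t * t ^ (2 / β - 1)
        * ∑ j, ‖X t j - x0 j + (((β / 2) * t : ℝ) : ℂ) * flowRHS β (X t) j‖ ^ 2) t := by
    intro t ht
    simp only [Complex.real_smul.symm, sum_norm_add_smul_sq, hρ]
    exact hasDerivAt_exp_neg_rpow_mul_sub_integral hβ ht
      (hasDerivAt_sum_norm_sub_sq x0 (hflow t)) hB
  have hanti : AntitoneOn ρ (Set.Ioi 0) := by
    refine antitoneOn_of_hasDerivWithinAt_nonpos (convex_Ioi 0)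
      (fun t ht => (hderiv t ht).continuousAt.continuousWithinAt)
      (fun t ht => (hderiv t (interior_subset ht)).hasDerivWithinAt) fun t ht => ?_
    rw [interior_Ioi] at ht
    have hρpos : 0 < ρ t := by rw [hρ]; exact Real.exp_pos _
    have hsum := Finset.sum_nonneg fun j (_ : j ∈ Finset.univ) =>
      sq_nonneg ‖X t j - x0 j + (((β / 2) * t : ℝ) : ℂ) * flowRHS β (X t) j‖
    have hpow := Real.rpow_pos_of_pos ht (2 / β - 1)
    have hcoef : 0 ≤ (2 / β) * ρ t * t ^ (2 / β - 1) := by positivity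
    nlinarith
  exact ⟨hderiv, fun s t hs hst => hanti hs (hs.trans_le hst) hst⟩
end

section
/- For a nondegenerate triangle with angles (θ_0, θ_1, θ_2) in the open simplex Ω, edge lengths l_0, l_1, l_2, and area S > 0, the expression W = (1/(2S)) [ l_1² sin²θ_1 (l_2^β − l_1^β)(θ_0 − θ_1)(π − θ_2) + l_0² sin²θ_0 (l_0^β − l_1^β)(θ_0 − θ_2)(π − θ_1) + l_2² sin²θ_2 (l_0^β − l_2^β)(θ_1 − θ_2)(π − θ_0) ] satisfies W ≤ 0, with equality if and only if θ_0 = θ_1 = θ_2 = π/3. -/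
/-!
By the law of sines the edges are `lᵢ = k sin θ` for the opposite angles `θ`, and on a triangle
`sin a < sin b ↔ a < b` because `a + b < π`. Hence `l ↦ l ^ β` orders the edges exactly as their
opposite angles, so each of the three summands of `W` is a positive weight times
`(l_b ^ β - l_a ^ β) (θ_a - θ_b) ≤ 0`, which vanishes only when `θ_a = θ_b`.
-/

open Real

lemma Real.sin_lt_sin_of_lt_of_add_lt_pi {a b : ℝ} (ha : 0 < a) (hab : a < b) (h : a + b < π) :
    sin a < sin b := by
  have hsin : 0 < sin ((b - a) / 2) := sin_pos_of_pos_of_lt_pi (by linarith) (by linarith)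
  have hcos : 0 < cos ((b + a) / 2) := cos_pos_of_mem_Ioo ⟨by linarith [pi_pos], by linarith⟩
  have := sin_sub_sin b a
  nlinarith [mul_pos hsin hcos]

lemma Real.sin_lt_sin_iff_of_add_lt_pi {a b : ℝ} (ha : 0 < a) (hb : 0 < b) (h : a + b < π) :
    sin a < sin b ↔ a < b := by
  refine ⟨fun hsin => lt_of_not_ge fun hba => ?_, fun hab => sin_lt_sin_of_lt_of_add_lt_pi ha hab h⟩
  rcases hba.eq_or_lt with rfl | hba
  · exact hsin.false
  · exact (sin_lt_sin_of_lt_of_add_lt_pi hb hba (by linarith)).not_gt hsin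

lemma rpow_mul_sin_lt_rpow_mul_sin_iff {β k a b : ℝ} (hβ : 0 < β) (hk : 0 < k) (ha : 0 < a)
    (hb : 0 < b) (h : a + b < π) : (k * sin a) ^ β < (k * sin b) ^ β ↔ a < b := by
  have hsa : 0 ≤ sin a := (sin_pos_of_pos_of_lt_pi ha (by linarith)).le
  have hsb : 0 ≤ sin b := (sin_pos_of_pos_of_lt_pi hb (by linarith)).le
  rw [rpow_lt_rpow_iff (by positivity) (by positivity) hβ, mul_lt_mul_iff_right₀ hk,
    sin_lt_sin_iff_of_add_lt_pi ha hb h]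

lemma mul_sub_mul_sub_mul_neg {c d x y a b : ℝ} (hc : 0 < c) (hd : 0 < d)
    (hlt : x < y ↔ a < b) (hgt : y < x ↔ b < a) (hab : a ≠ b) :
    c * (y - x) * (a - b) * d < 0 := by
  rcases hab.lt_or_gt with hab | hab
  · have hxy := hlt.2 hab
    exact mul_neg_of_neg_of_pos
      (mul_neg_of_pos_of_neg (mul_pos hc (sub_pos.2 hxy)) (sub_neg.2 hab)) hd
  · have hyx := hgt.2 hab
    exact mul_neg_of_neg_of_pos
      (mul_neg_of_neg_of_pos (mul_neg_of_pos_of_neg hc (sub_neg.2 hyx)) (sub_pos.2 hab)) hd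

lemma mul_sub_mul_sub_mul_nonpos {c d x y a b : ℝ} (hc : 0 < c) (hd : 0 < d)
    (hlt : x < y ↔ a < b) (hgt : y < x ↔ b < a) :
    c * (y - x) * (a - b) * d ≤ 0 ∧ (c * (y - x) * (a - b) * d = 0 ↔ a = b) := by
  by_cases hab : a = b
  · subst hab
    simp
  · have hneg := mul_sub_mul_sub_mul_neg hc hd hlt hgt hab
    exact ⟨hneg.le, iff_of_false hneg.ne hab⟩

lemma mul_rpow_mul_sin_sub_mul_sub_mul_nonpos {β k c d a b : ℝ} (hβ : 0 < β) (hk : 0 < k)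
    (hc : 0 < c) (hd : 0 < d) (ha : 0 < a) (hb : 0 < b) (h : a + b < π) :
    c * ((k * sin b) ^ β - (k * sin a) ^ β) * (a - b) * d ≤ 0 ∧
      (c * ((k * sin b) ^ β - (k * sin a) ^ β) * (a - b) * d = 0 ↔ a = b) :=
  mul_sub_mul_sub_mul_nonpos hc hd (rpow_mul_sin_lt_rpow_mul_sin_iff hβ hk ha hb h)
    (rpow_mul_sin_lt_rpow_mul_sin_iff hβ hk hb ha (by linarith))

lemma exists_pos_eq_mul_of_div_eq_div {l₀ l₁ l₂ s₀ s₁ s₂ : ℝ} (hl₁ : 0 < l₁) (hs₀ : 0 < s₀)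
    (hs₁ : s₁ ≠ 0) (hs₂ : s₂ ≠ 0) (h₁ : l₀ / s₂ = l₁ / s₀) (h₂ : l₁ / s₀ = l₂ / s₁) :
    ∃ k > 0, l₀ = k * s₂ ∧ l₁ = k * s₀ ∧ l₂ = k * s₁ :=
  ⟨l₁ / s₀, div_pos hl₁ hs₀, by rw [← h₁, div_mul_cancel₀ _ hs₂],
    (div_mul_cancel₀ _ hs₀.ne').symm, by rw [h₂, div_mul_cancel₀ _ hs₁]⟩

theorem stmt13_general (β : ℝ) (hβ : 0 < β) (t0 t1 t2 l0 l1 l2 S : ℝ)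
    (hsum : t0 + t1 + t2 = π)
    (ht0 : 0 < t0) (ht0' : t0 < π) (ht1 : 0 < t1) (ht1' : t1 < π)
    (ht2 : 0 < t2) (ht2' : t2 < π)
    (hl1 : 0 < l1)
    (hSpos : 0 < S)
    (hlaw1 : l0 / Real.sin t2 = l1 / Real.sin t0)
    (hlaw2 : l1 / Real.sin t0 = l2 / Real.sin t1) :
    (1 / (2 * S)) * (l1 ^ 2 * Real.sin t1 ^ 2 * (l2 ^ β - l1 ^ β) * (t0 - t1) * (π - t2)
        + l0 ^ 2 * Real.sin t0 ^ 2 * (l0 ^ β - l1 ^ β) * (t0 - t2) * (π - t1)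
        + l2 ^ 2 * Real.sin t2 ^ 2 * (l0 ^ β - l2 ^ β) * (t1 - t2) * (π - t0)) ≤ 0 ∧
    ((1 / (2 * S)) * (l1 ^ 2 * Real.sin t1 ^ 2 * (l2 ^ β - l1 ^ β) * (t0 - t1) * (π - t2)
        + l0 ^ 2 * Real.sin t0 ^ 2 * (l0 ^ β - l1 ^ β) * (t0 - t2) * (π - t1)
        + l2 ^ 2 * Real.sin t2 ^ 2 * (l0 ^ β - l2 ^ β) * (t1 - t2) * (π - t0)) = 0
      ↔ (t0 = π / 3 ∧ t1 = π / 3 ∧ t2 = π / 3)) := by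
  have hs0 := sin_pos_of_pos_of_lt_pi ht0 ht0'
  have hs1 := sin_pos_of_pos_of_lt_pi ht1 ht1'
  have hs2 := sin_pos_of_pos_of_lt_pi ht2 ht2'
  obtain ⟨k, hk, rfl, rfl, rfl⟩ :=
    exists_pos_eq_mul_of_div_eq_div hl1 hs0 hs1.ne' hs2.ne' hlaw1 hlaw2
  have h01 := mul_rpow_mul_sin_sub_mul_sub_mul_nonpos hβ hk
    (c := (k * sin t0) ^ 2 * sin t1 ^ 2) (by positivity) (sub_pos.2 ht2') ht0 ht1 (by linarith)
  have h02 := mul_rpow_mul_sin_sub_mul_sub_mul_nonpos hβ hk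
    (c := (k * sin t2) ^ 2 * sin t0 ^ 2) (by positivity) (sub_pos.2 ht1') ht0 ht2 (by linarith)
  have h12 := mul_rpow_mul_sin_sub_mul_sub_mul_nonpos hβ hk
    (c := (k * sin t1) ^ 2 * sin t2 ^ 2) (by positivity) (sub_pos.2 ht0') ht1 ht2 (by linarith)
  have hS : 1 / (2 * S) ≠ 0 := by positivity
  refine ⟨mul_nonpos_of_nonneg_of_nonpos (by positivity) (by linarith [h01.1, h02.1, h12.1]), ?_⟩
  rw [mul_eq_zero, or_iff_right hS]
  constructor
  · intro hW
    have e01 := h01.2.1 (by linarith [h01.1, h02.1, h12.1])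
    have e02 := h02.2.1 (by linarith [h01.1, h02.1, h12.1])
    refine ⟨?_, ?_, ?_⟩ <;> linarith
  · rintro ⟨h0, h1, h2⟩
    linarith [h01.2.2 (h0.trans h1.symm), h02.2.2 (h0.trans h2.symm), h12.2.2 (h1.trans h2.symm)]

theorem stmt13 (β : ℝ) (hβ : 0 < β) (t0 t1 t2 l0 l1 l2 S : ℝ)
    (hsum : t0 + t1 + t2 = π)
    (ht0 : 0 < t0) (ht0' : t0 < π) (ht1 : 0 < t1) (ht1' : t1 < π)
    (ht2 : 0 < t2) (ht2' : t2 < π)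
    (hl0 : 0 < l0) (hl1 : 0 < l1) (hl2 : 0 < l2)
    (hS : S = 1 / 2 * l0 * l2 * Real.sin t0) (hSpos : 0 < S)
    (hlaw1 : l0 / Real.sin t2 = l1 / Real.sin t0)
    (hlaw2 : l1 / Real.sin t0 = l2 / Real.sin t1) :
    (1 / (2 * S)) * (l1 ^ 2 * Real.sin t1 ^ 2 * (l2 ^ β - l1 ^ β) * (t0 - t1) * (π - t2)
        + l0 ^ 2 * Real.sin t0 ^ 2 * (l0 ^ β - l1 ^ β) * (t0 - t2) * (π - t1)
        + l2 ^ 2 * Real.sin t2 ^ 2 * (l0 ^ β - l2 ^ β) * (t1 - t2) * (π - t0)) ≤ 0 ∧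
    ((1 / (2 * S)) * (l1 ^ 2 * Real.sin t1 ^ 2 * (l2 ^ β - l1 ^ β) * (t0 - t1) * (π - t2)
        + l0 ^ 2 * Real.sin t0 ^ 2 * (l0 ^ β - l1 ^ β) * (t0 - t2) * (π - t1)
        + l2 ^ 2 * Real.sin t2 ^ 2 * (l0 ^ β - l2 ^ β) * (t1 - t2) * (π - t0)) = 0
      ↔ (t0 = π / 3 ∧ t1 = π / 3 ∧ t2 = π / 3)) :=
  stmt13_general β hβ t0 t1 t2 l0 l1 l2 S hsum ht0 ht0' ht1 ht1' ht2 ht2' hl1 hSpos hlaw1 hlaw2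
end

section
/- Let θ = π/N and let E be the 2N×2N real symmetric matrix E = [[A, C],[C, B]] where A, B, C are the cyclic weighted Laplacians (as in the lapcycle lemma) with weights a_k = sin²((2k+1)θ), b_k = cos²((2k+1)θ), and c_k = -cos((2k+1)θ) sin((2k+1)θ) respectively (indices mod N). Then for every X = (x^r, x^i) ∈ ℝ^{2N}, X^T E X = -∑_{k=0}^{N-1} [ sin((2k+1)θ)(x^r_{k+1} - x^r_k) - cos((2k+1)θ)(x^i_{k+1} - x^i_k) ]². In particular E is negative semidefinite. -/
open Matrix

/-- The weighted graph Laplacian of the `n`-cycle with weight `a k` on the edge from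
vertex `k` to vertex `k+1` (indices mod `n`). -/
def cycLap (n : ℕ) [NeZero n] (a : ZMod n → ℝ) : Matrix (ZMod n) (ZMod n) ℝ :=
  Matrix.of fun k m =>
    (if m = k + 1 then a k else 0) + (if m = k - 1 then a m else 0)
      - (if m = k then a (k - 1) + a k else 0)

/-- The `2N × 2N` block matrix `E = [[A, C], [C, B]]` where `A`, `B`, `C` are cyclic weighted
Laplacians with weights `sin²((2k+1)π/N)`, `cos²((2k+1)π/N)`, and
`-cos((2k+1)π/N) sin((2k+1)π/N)` respectively. -/
noncomputable def Emat (N : ℕ) [NeZero N] :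
    Matrix (ZMod N ⊕ ZMod N) (ZMod N ⊕ ZMod N) ℝ :=
  Matrix.fromBlocks
    (cycLap N fun k => Real.sin ((2 * k.val + 1) * (Real.pi / N)) ^ 2)
    (cycLap N fun k =>
      -(Real.cos ((2 * k.val + 1) * (Real.pi / N)) * Real.sin ((2 * k.val + 1) * (Real.pi / N))))
    (cycLap N fun k =>
      -(Real.cos ((2 * k.val + 1) * (Real.pi / N)) * Real.sin ((2 * k.val + 1) * (Real.pi / N))))
    (cycLap N fun k => Real.cos ((2 * k.val + 1) * (Real.pi / N)) ^ 2)

lemma cycLap_quad (n : ℕ) [NeZero n] (a : ZMod n → ℝ) (x y : ZMod n → ℝ) :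
    x ⬝ᵥ (cycLap n a).mulVec y
      = -∑ k : ZMod n, a k * (x (k + 1) - x k) * (y (k + 1) - y k) := by
  have h : ∀ k : ZMod n, (cycLap n a).mulVec y k
      = a k * y (k + 1) + a (k - 1) * y (k - 1) - (a (k - 1) + a k) * y k := by
    intro k
    simp [cycLap, Matrix.mulVec, dotProduct, sub_mul, add_mul, ite_mul,
      Finset.sum_sub_distrib, Finset.sum_add_distrib]
  simp only [dotProduct, h]
  have shift : ∀ f : ZMod n → ℝ, ∑ k : ZMod n, f k = ∑ k : ZMod n, f (k + 1) :=
    fun f => (Fintype.sum_equiv (Equiv.addRight (1 : ZMod n)) _ _ (fun k => rfl)).symm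
  have : ∑ k : ZMod n, x k * (a k * y (k + 1) + a (k - 1) * y (k - 1) - (a (k - 1) + a k) * y k)
      = ∑ k : ZMod n, (x k * (a k * y (k + 1)) - x k * (a k * y k))
        + ∑ k : ZMod n, (x k * (a (k-1) * y (k - 1)) - x k * (a (k-1) * y k)) := by
    rw [← Finset.sum_add_distrib]; congr 1; ext k; ring
  rw [this, shift (fun k => x k * (a (k-1) * y (k - 1)) - x k * (a (k-1) * y k))]
  simp only [add_sub_cancel_right]
  rw [← Finset.sum_add_distrib, ← Finset.sum_neg_distrib]
  congr 1; ext k; ring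

theorem stmt14 (N : ℕ) [NeZero N] :
    ∀ x : ZMod N ⊕ ZMod N → ℝ,
      x ⬝ᵥ (Emat N).mulVec x
          = -∑ k : ZMod N,
              (Real.sin ((2 * k.val + 1) * (Real.pi / N)) * (x (Sum.inl (k + 1)) - x (Sum.inl k))
                - Real.cos ((2 * k.val + 1) * (Real.pi / N))
                    * (x (Sum.inr (k + 1)) - x (Sum.inr k))) ^ 2 ∧
      x ⬝ᵥ (Emat N).mulVec x ≤ 0 := by
  intro x
  set xr : ZMod N → ℝ := fun k => x (Sum.inl k) with hxr
  set xi : ZMod N → ℝ := fun k => x (Sum.inr k) with hxi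
  have hx : x = Sum.elim xr xi := by funext s; cases s <;> rfl
  have key : x ⬝ᵥ (Emat N).mulVec x
      = -∑ k : ZMod N,
          (Real.sin ((2 * k.val + 1) * (Real.pi / N)) * (x (Sum.inl (k + 1)) - x (Sum.inl k))
            - Real.cos ((2 * k.val + 1) * (Real.pi / N))
                * (x (Sum.inr (k + 1)) - x (Sum.inr k))) ^ 2 := by
    rw [hx]
    rw [Emat, Matrix.fromBlocks_mulVec, sumElim_dotProduct_sumElim]
    simp only [dotProduct_add]
    rw [cycLap_quad, cycLap_quad, cycLap_quad, cycLap_quad]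
    simp only [← Finset.sum_neg_distrib]
    rw [← Finset.sum_add_distrib, ← Finset.sum_add_distrib, ← Finset.sum_add_distrib]
    congr 1; ext k
    simp only [Function.comp_apply, Sum.elim_inl, Sum.elim_inr]
    ring
  exact ⟨key, by
    rw [key]
    simp only [neg_nonpos]
    exact Finset.sum_nonneg fun k _ => sq_nonneg _⟩
end

section
/- With E as above (θ = π/N), the kernel of E is exactly { X = (x^r, x^i) ∈ ℝ^{2N} : sin((2k+1)θ)(x^r_{k+1} - x^r_k) = cos((2k+1)θ)(x^i_{k+1} - x^i_k) for all k = 0,...,N-1 (indices mod N) }. -/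
open Matrix

lemma cycLap_mulVec (N : ℕ) [NeZero N] (a y : ZMod N → ℝ) (k : ZMod N) :
    (cycLap N a).mulVec y k
      = a k * (y (k+1) - y k) - a (k-1) * (y k - y (k-1)) := by
  simp only [Matrix.mulVec, dotProduct, cycLap, Matrix.of_apply, sub_mul, add_mul, ite_mul,
    zero_mul, Finset.sum_sub_distrib, Finset.sum_add_distrib, Finset.sum_ite_eq',
    Finset.mem_univ, if_true]
  ring

theorem stmt15 (N : ℕ) [NeZero N] :
    ∀ x : ZMod N ⊕ ZMod N → ℝ,
      (Emat N).mulVec x = 0 ↔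
        ∀ k : ZMod N,
          Real.sin ((2 * k.val + 1) * (Real.pi / N)) * (x (Sum.inl (k + 1)) - x (Sum.inl k))
            = Real.cos ((2 * k.val + 1) * (Real.pi / N))
                * (x (Sum.inr (k + 1)) - x (Sum.inr k)) := by
  intro x
  set s : ZMod N → ℝ := fun k => Real.sin ((2 * k.val + 1) * (Real.pi / N)) with hs
  set c : ZMod N → ℝ := fun k => Real.cos ((2 * k.val + 1) * (Real.pi / N)) with hc
  set d : ZMod N → ℝ := fun k =>
    s k * (x (Sum.inl (k + 1)) - x (Sum.inl k)) - c k * (x (Sum.inr (k + 1)) - x (Sum.inr k))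
    with hd
  have hx : x = Sum.elim (fun i => x (Sum.inl i)) (fun i => x (Sum.inr i)) := by
    ext (i | i) <;> rfl
  have hmul : (Emat N).mulVec x =
      Sum.elim
        (fun k => (cycLap N fun k => s k ^ 2).mulVec (fun i => x (Sum.inl i)) k
          + (cycLap N fun k => -(c k * s k)).mulVec (fun i => x (Sum.inr i)) k)
        (fun k => (cycLap N fun k => -(c k * s k)).mulVec (fun i => x (Sum.inl i)) k
          + (cycLap N fun k => c k ^ 2).mulVec (fun i => x (Sum.inr i)) k) := by
    conv_lhs => rw [hx, Emat, Matrix.fromBlocks_mulVec]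
    rfl
  have hl : ∀ k, (Emat N).mulVec x (Sum.inl k) = s k * d k - s (k - 1) * d (k - 1) := by
    intro k
    rw [hmul]
    simp only [Sum.elim_inl, cycLap_mulVec, hd]
    ring_nf
  have hr : ∀ k, (Emat N).mulVec x (Sum.inr k) = -(c k * d k) + c (k - 1) * d (k - 1) := by
    intro k
    rw [hmul]
    simp only [Sum.elim_inr, cycLap_mulVec, hd]
    ring_nf
  constructor
  · intro hE k
    have shift : ∀ f : ZMod N → ℝ, ∑ j, f (j + 1) = ∑ j, f j :=
      fun f => Fintype.sum_equiv (Equiv.addRight (1 : ZMod N)) _ _ (fun j => rfl)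
    have hQ : ∑ j, (x (Sum.inl j) * (Emat N).mulVec x (Sum.inl j)
        + x (Sum.inr j) * (Emat N).mulVec x (Sum.inr j)) = -∑ j, d j ^ 2 := by
      have step : ∀ j : ZMod N,
          x (Sum.inl j) * (Emat N).mulVec x (Sum.inl j)
            + x (Sum.inr j) * (Emat N).mulVec x (Sum.inr j)
          = (x (Sum.inl j) * (s j * d j) - x (Sum.inr j) * (c j * d j))
            - (x (Sum.inl ((j - 1) + 1)) * (s (j - 1) * d (j - 1))
              - x (Sum.inr ((j - 1) + 1)) * (c (j - 1) * d (j - 1))) := by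
        intro j
        rw [hl, hr, sub_add_cancel]
        ring
      have e1 : ∑ j : ZMod N, x (Sum.inl ((j - 1) + 1)) * (s (j - 1) * d (j - 1))
          = ∑ j : ZMod N, x (Sum.inl (j + 1)) * (s j * d j) :=
        Fintype.sum_equiv (Equiv.subRight (1 : ZMod N)) _ _ (fun j => rfl)
      have e2 : ∑ j : ZMod N, x (Sum.inr ((j - 1) + 1)) * (c (j - 1) * d (j - 1))
          = ∑ j : ZMod N, x (Sum.inr (j + 1)) * (c j * d j) :=
        Fintype.sum_equiv (Equiv.subRight (1 : ZMod N)) _ _ (fun j => rfl)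
      simp only [step, Finset.sum_sub_distrib]
      rw [e1, e2, ← Finset.sum_neg_distrib, ← Finset.sum_sub_distrib,
        ← Finset.sum_sub_distrib, ← Finset.sum_sub_distrib]
      refine Finset.sum_congr rfl fun j _ => ?_
      simp only [hd]
      ring
    rw [hE] at hQ
    simp only [Pi.zero_apply, mul_zero, add_zero, Finset.sum_const_zero] at hQ
    have hsum : ∑ j, d j ^ 2 = 0 := by linarith
    have hdk : d k = 0 := by
      have := (Finset.sum_eq_zero_iff_of_nonneg
        (fun j _ => sq_nonneg (d j))).mp hsum k (Finset.mem_univ k)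
      exact pow_eq_zero_iff (by norm_num) |>.mp this
    have := sub_eq_zero.mp hdk
    exact this
  · intro h
    have hdz : ∀ k, d k = 0 := fun k => by
      simp only [hd]; rw [sub_eq_zero]; exact h k
    funext j
    cases j with
    | inl k => rw [hl k, hdz, hdz]; simp
    | inr k => rw [hr k, hdz, hdz]; simp
end

section
/- Let N ≥ 5, θ = π/N. Suppose real numbers a_{11}, a_{12}, a_{21}, a_{22} satisfy, for all k = 0,...,N-1, -sin²((2k+1)θ) a_{11} + cos((2k+1)θ) sin((2k+1)θ)(a_{12} + a_{21}) - cos²((2k+1)θ) a_{22} = 0. Then a_{11} = a_{22} = 0 and a_{12} = -a_{21}. -/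
open Real

set_option maxHeartbeats 1000000 in
theorem stmt16 (N : ℕ) (hN : 5 ≤ N) (a11 a12 a21 a22 : ℝ)
    (h : ∀ k : ℕ, k < N →
      -Real.sin ((2 * k + 1) * (π / N)) ^ 2 * a11
        + Real.cos ((2 * k + 1) * (π / N)) * Real.sin ((2 * k + 1) * (π / N)) * (a12 + a21)
        - Real.cos ((2 * k + 1) * (π / N)) ^ 2 * a22 = 0) :
    a11 = 0 ∧ a22 = 0 ∧ a12 = -a21 := by
  have hN5 : (5:ℝ) ≤ (N:ℝ) := by exact_mod_cast hN
  have hNpos : (0:ℝ) < (N:ℝ) := by linarith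
  set θ := π / N with hθ
  have hπ := Real.pi_pos
  have hθpos : 0 < θ := div_pos hπ hNpos
  have hθle : θ ≤ π / 5 := by
    rw [hθ, div_le_div_iff₀ hNpos (by norm_num)]
    nlinarith
  have hs : 0 < Real.sin θ := Real.sin_pos_of_pos_of_lt_pi hθpos (by linarith)
  have hc : 0 < Real.cos θ := Real.cos_pos_of_mem_Ioo ⟨by linarith, by linarith⟩
  have hcos2 : 0 < Real.cos (2 * θ) :=
    Real.cos_pos_of_mem_Ioo ⟨by linarith, by linarith⟩
  have h0 := h 0 (by omega)
  have h1 := h 1 (by omega)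
  have h2 := h (N - 1) (by omega)
  norm_num at h0 h1
  have hcast : ((N - 1 : ℕ) : ℝ) = (N : ℝ) - 1 := by
    rw [Nat.cast_sub (by omega)]; norm_num
  have hang : (2 * ((N - 1 : ℕ) : ℝ) + 1) * θ = 2 * π - θ := by
    rw [hcast, hθ]
    field_simp
    ring
  rw [hang] at h2
  have hsin2 : Real.sin (2 * π - θ) = -Real.sin θ := by
    rw [Real.sin_sub]; simp
  have hcos2π : Real.cos (2 * π - θ) = Real.cos θ := by
    rw [Real.cos_sub]; simp
  rw [hsin2, hcos2π] at h2
  -- a12 + a21 = 0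
  have hX : a12 + a21 = 0 := by
    have hcs : 0 < Real.cos θ * Real.sin θ := mul_pos hc hs
    have : 2 * (Real.cos θ * Real.sin θ) * (a12 + a21) = 0 := by linear_combination h0 - h2
    have h2cs : 2 * (Real.cos θ * Real.sin θ) ≠ 0 := by positivity
    exact (mul_eq_zero.1 this).resolve_left h2cs
  set s := Real.sin θ
  set c := Real.cos θ
  have hpy : s ^ 2 + c ^ 2 = 1 := Real.sin_sq_add_cos_sq θ
  have e1 : s ^ 2 * a11 + c ^ 2 * a22 = 0 := by
    rw [hX] at h0; linarith
  have hsin3 : Real.sin (3 * θ) = 3 * s - 4 * s ^ 3 := Real.sin_three_mul θ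
  have hcos3 : Real.cos (3 * θ) = 4 * c ^ 3 - 3 * c := Real.cos_three_mul θ
  rw [hX, hsin3, hcos3] at h1
  have e2 : (3 * s - 4 * s ^ 3) ^ 2 * a11 + (4 * c ^ 3 - 3 * c) ^ 2 * a22 = 0 := by
    linarith
  have hc2 : 1 / 2 < c ^ 2 := by
    have := Real.cos_two_mul θ
    nlinarith
  have hkey : s ^ 2 * (4 * c ^ 3 - 3 * c) ^ 2 - (3 * s - 4 * s ^ 3) ^ 2 * c ^ 2
      = s ^ 2 * c ^ 2 * (8 - 16 * c ^ 2) := by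
    linear_combination (s ^ 2 * c ^ 2 * (8 + 16 * c ^ 2 - 16 * s ^ 2)) * hpy
  have hdet : s ^ 2 * (4 * c ^ 3 - 3 * c) ^ 2 - (3 * s - 4 * s ^ 3) ^ 2 * c ^ 2 < 0 := by
    rw [hkey]
    have h1 : 0 < s ^ 2 * c ^ 2 := by positivity
    nlinarith
  have ha11 : a11 = 0 := by
    have hmul : (s ^ 2 * (4 * c ^ 3 - 3 * c) ^ 2 - (3 * s - 4 * s ^ 3) ^ 2 * c ^ 2) * a11 = 0 := by
      linear_combination (4 * c ^ 3 - 3 * c) ^ 2 * e1 - c ^ 2 * e2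
    exact (mul_eq_zero.1 hmul).resolve_left (ne_of_lt hdet)
  have ha22 : a22 = 0 := by
    have hca : c ^ 2 * a22 = 0 := by rw [ha11] at e1; linarith
    have hcne : c ^ 2 ≠ 0 := pow_ne_zero 2 (ne_of_gt hc)
    exact (mul_eq_zero.1 hca).resolve_left hcne
  exact ⟨ha11, ha22, by linarith⟩
end
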